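/- arXiv:1706.02826 — 2 statements merged into one kernel-verified Lean document; each statement's English description precedes it below -/
import Mathlib

section
/- Fourier symbol of the left tempered fractional integral: for u ∈ L²(ℝ) ∩ L¹(ℝ) and μ, λ > 0, the Fourier transform of x ↦ ({}_{−∞}I_x^{μ,λ}u)(x) equals ω ↦ (λ + iω)^{−μ}·û(ω), where û(ω) = ∫_{−∞}^{∞} e^{−iωx} u(x) dx. -/
/-!
The tempered fractional integral is `Γ(μ)⁻¹` times the convolution of `u` with the kernel
`t₊^(μ-1) e^(-λt)`, so its Fourier transform is `Γ(μ)⁻¹ û` times the transform of the kernel,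
`∫₀^∞ t^(μ-1) e^(-(λ+iω)t) dt = Γ(μ) (λ+iω)^(-μ)`. This Gamma integral is classical for a real
positive rate, and both sides are holomorphic in the rate on the right half-plane, so the identity
theorem extends it to complex rates.
-/

open MeasureTheory Complex Set Filter Topology Convolution FourierTransform

section GammaIntegral

variable {a z : ℂ}

lemma integrableOn_cpow_mul_exp_neg_mul_Ioi (ha : 0 < a.re) (hz : 0 < z.re) :
    IntegrableOn (fun t : ℝ => (t : ℂ) ^ (a - 1) * exp (-(z * t))) (Ioi 0) := by
  have hreal := integrableOn_rpow_mul_exp_neg_mul_rpow (s := a.re - 1) (by linarith) one_pos hz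
  refine hreal.mono' (by fun_prop) ?_
  filter_upwards [ae_restrict_mem measurableSet_Ioi] with t (ht : 0 < t)
  rw [norm_mul, norm_cpow_eq_rpow_re_of_pos ht, norm_exp]
  simp [Real.rpow_one]

lemma differentiableOn_integral_cpow_mul_exp_neg_mul (ha : 0 < a.re) :
    DifferentiableOn ℂ (fun w : ℂ => ∫ t in Ioi (0 : ℝ), (t : ℂ) ^ (a - 1) * exp (-(w * t)))
      {w | 0 < w.re} := by
  intro z (hz : 0 < z.re)
  have hc : 0 < z.re / 2 := half_pos hz
  have hball : ∀ w ∈ Metric.ball z (z.re / 2), z.re / 2 < w.re := fun w hw => by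
    have := (abs_re_le_norm (w - z)).trans_lt (mem_ball_iff_norm.mp hw)
    rw [sub_re, abs_lt] at this
    linarith
  have hderiv := hasDerivAt_integral_of_dominated_loc_of_deriv_le
    (μ := volume.restrict (Ioi 0))
    (F := fun w (t : ℝ) => (t : ℂ) ^ (a - 1) * exp (-(w * t)))
    (F' := fun w (t : ℝ) => (t : ℂ) ^ (a - 1) * (exp (-(w * t)) * -(t : ℂ)))
    (bound := fun t : ℝ => t ^ a.re * Real.exp (-(z.re / 2) * t ^ (1 : ℝ)))
    (Metric.ball_mem_nhds z hc) (.of_forall fun w => by fun_prop)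
    (integrableOn_cpow_mul_exp_neg_mul_Ioi ha hz) (by fun_prop) ?_
    (integrableOn_rpow_mul_exp_neg_mul_rpow (by linarith) one_pos hc) ?_
  · exact hderiv.2.differentiableAt.differentiableWithinAt
  · filter_upwards [ae_restrict_mem measurableSet_Ioi] with t (ht : 0 < t) w hw
    have hexp : Real.exp (-(w.re * t)) ≤ Real.exp (-(z.re / 2) * t) :=
      Real.exp_le_exp.2 (by nlinarith [hball w hw])
    calc _ = t ^ a.re * Real.exp (-(w.re * t)) := by
          rw [norm_mul, norm_mul, norm_neg, norm_cpow_eq_rpow_re_of_pos ht, norm_exp, norm_real,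
            Real.norm_of_nonneg ht.le]
          simp only [sub_re, one_re, Real.rpow_sub_one ht.ne', neg_re, mul_re, ofReal_re, ofReal_im,
            mul_zero, sub_zero]
          field_simp
      _ ≤ _ := by rw [Real.rpow_one]; gcongr
  · refine .of_forall fun t w _ => ?_
    simpa using ((hasDerivAt_id w).mul_const (t : ℂ)).neg.cexp.const_mul ((t : ℂ) ^ (a - 1))

theorem integral_cpow_mul_exp_neg_mul_Ioi_of_re_pos (ha : 0 < a.re) (hz : 0 < z.re) :
    ∫ t in Ioi (0 : ℝ), (t : ℂ) ^ (a - 1) * exp (-(z * t)) = Gamma a * z ^ (-a) := by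
  have hU : IsOpen {w : ℂ | 0 < w.re} := isOpen_lt continuous_const continuous_re
  have hG : DifferentiableOn ℂ (fun w : ℂ => Gamma a * w ^ (-a)) {w | 0 < w.re} :=
    fun w hw => ((differentiableAt_id.cpow_const (.inl hw)).const_mul _).differentiableWithinAt
  have hreal : ∀ r : ℝ, 0 < r →
      ∫ t in Ioi (0 : ℝ), (t : ℂ) ^ (a - 1) * exp (-(r * t)) = Gamma a * (r : ℂ) ^ (-a) := by
    intro r hr
    rw [integral_cpow_mul_exp_neg_mul_Ioi ha hr, one_div,
      inv_cpow _ _ (by rw [arg_ofReal_of_nonneg hr.le]; exact Real.pi_ne_zero.symm),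
      ← cpow_neg, mul_comm]
  have hfreq : ∃ᶠ w in 𝓝[≠] (1 : ℂ), (∫ t in Ioi (0 : ℝ), (t : ℂ) ^ (a - 1) * exp (-(w * t))) =
      Gamma a * w ^ (-a) := by
    have hmap : Tendsto ((↑) : ℝ → ℂ) (𝓝[≠] 1) (𝓝[≠] 1) :=
      tendsto_nhdsWithin_of_tendsto_nhds_of_eventually_within _
        ((continuous_ofReal.tendsto' 1 1 ofReal_one).mono_left nhdsWithin_le_nhds)
        (eventually_nhdsWithin_of_forall fun r hr => by simpa using hr)
    exact hmap.frequently ((eventually_nhdsWithin_of_eventually_nhds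
      (lt_mem_nhds one_pos)).mono hreal).frequently
  exact ((differentiableOn_integral_cpow_mul_exp_neg_mul ha).analyticOnNhd hU
    ).eqOn_of_preconnected_of_frequently_eq (hG.analyticOnNhd hU)
    (convex_halfSpace_re_gt 0).isPreconnected (by simp) hfreq hz

end GammaIntegral

lemma integral_exp_neg_I_mul_mul_eq_fourier (f : ℝ → ℂ) (ω : ℝ) :
    ∫ x : ℝ, exp (-I * ω * x) * f x = 𝓕 f (ω / (2 * Real.pi)) := by
  rw [Real.fourier_real_eq_integral_exp_smul]
  congr 1 with x
  rw [smul_eq_mul]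
  congr 2
  push_cast
  field_simp

lemma setIntegral_Iic_mul_eq_convolution {𝕜 : Type*} [NontriviallyNormedField 𝕜] [NormedSpace ℝ 𝕜]
    (K u : ℝ → 𝕜) (x : ℝ) :
    ∫ ξ in Iic x, K (x - ξ) * u ξ = ((Ioi 0).indicator K ⋆[ContinuousLinearMap.mul 𝕜 𝕜] u) x := by
  rw [convolution_mul_swap, ← setIntegral_congr_set Iio_ae_eq_Iic,
    ← integral_indicator measurableSet_Iio]
  congr 1 with ξ
  by_cases h : ξ < x <;> simp [h]

noncomputable def temperedKernel (a : ℂ) (lam : ℝ) : ℝ → ℂ :=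
  (Ioi 0).indicator fun t => (t : ℂ) ^ (a - 1) * exp (-lam * t)

section TemperedKernel

variable {a : ℂ} {lam : ℝ}

lemma integrable_temperedKernel (ha : 0 < a.re) (hlam : 0 < lam) :
    Integrable (temperedKernel a lam) :=
  (integrable_indicator_iff measurableSet_Ioi).2 <|
    (integrableOn_cpow_mul_exp_neg_mul_Ioi ha (z := lam) (by simpa)).congr_fun
      (fun t _ => by rw [neg_mul]) measurableSet_Ioi

lemma integral_exp_neg_I_mul_mul_temperedKernel (ha : 0 < a.re) (hlam : 0 < lam) (ω : ℝ) :
    ∫ t : ℝ, exp (-I * ω * t) * temperedKernel a lam t = Gamma a * (lam + I * ω) ^ (-a) := by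
  rw [← integral_cpow_mul_exp_neg_mul_Ioi_of_re_pos ha (by simpa),
    ← integral_indicator measurableSet_Ioi]
  congr 1 with t
  rw [temperedKernel, ← indicator_mul_right (Ioi 0) (fun t : ℝ => exp (-I * ω * t))]
  congr 1 with t
  rw [mul_left_comm, ← exp_add]
  ring_nf

end TemperedKernel

theorem stmt_5_general (μ lam : ℝ) (hμ : 0 < μ) (hlam : 0 < lam)
    (u : ℝ → ℂ) (hu1 : Integrable u) :
    ∀ ω : ℝ,
      (∫ x : ℝ, Complex.exp (-Complex.I * ω * x) *
        ((1 / (Real.Gamma μ : ℂ)) *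
          ∫ ξ in Set.Iic x, ((x - ξ : ℝ) : ℂ) ^ (μ - 1 : ℂ) *
            Complex.exp (-lam * (x - ξ)) * u ξ)) =
      ((lam : ℂ) + Complex.I * ω) ^ (-(μ : ℂ)) *
        ∫ x : ℝ, Complex.exp (-Complex.I * ω * x) * u x := by
  intro ω
  have hμ' : 0 < (μ : ℂ).re := by simpa
  have hconv (x : ℝ) : ∫ ξ in Iic x, ((x - ξ : ℝ) : ℂ) ^ (μ - 1 : ℂ) * exp (-lam * (x - ξ)) * u ξ
      = (temperedKernel μ lam ⋆[ContinuousLinearMap.mul ℂ ℂ] u) x := by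
    rw [temperedKernel, ← setIntegral_Iic_mul_eq_convolution]
    push_cast
    rfl
  simp_rw [hconv, mul_left_comm _ (1 / _ : ℂ), integral_const_mul,
    integral_exp_neg_I_mul_mul_eq_fourier,
    Real.fourier_mul_convolution_eq (integrable_temperedKernel hμ' hlam) hu1,
    ← integral_exp_neg_I_mul_mul_eq_fourier,
    integral_exp_neg_I_mul_mul_temperedKernel hμ' hlam, ← Gamma_ofReal]
  field_simp [Gamma_ne_zero_of_re_pos hμ']

theorem stmt_5 (μ lam : ℝ) (hμ : 0 < μ) (hlam : 0 < lam)
    (u : ℝ → ℂ) (hu1 : Integrable u) (hu2 : MemLp u 2 volume) :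
    ∀ ω : ℝ,
      (∫ x : ℝ, Complex.exp (-Complex.I * ω * x) *
        ((1 / (Real.Gamma μ : ℂ)) *
          ∫ ξ in Set.Iic x, ((x - ξ : ℝ) : ℂ) ^ (μ - 1 : ℂ) *
            Complex.exp (-lam * (x - ξ)) * u ξ)) =
      ((lam : ℂ) + Complex.I * ω) ^ (-(μ : ℂ)) *
        ∫ x : ℝ, Complex.exp (-Complex.I * ω * x) * u x :=
  stmt_5_general μ lam hμ hlam u hu1
end

section
/- Fourier symbol of the right tempered fractional integral: for u ∈ L²(ℝ) ∩ L¹(ℝ) and μ, λ > 0, the Fourier transform of x ↦ ({}_xI_∞^{μ,λ}u)(x) equals ω ↦ (λ − iω)^{−μ}·û(ω). -/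
/-!
Write the right tempered integral as the convolution of `u` with the reflected kernel
`k (-·)`, where `k t = t ^ (μ - 1) e ^ (-λ t)` for `t > 0` and `0` otherwise. By the
convolution theorem it remains to compute the Fourier transform of `k (-·)`, which is the
Gamma integral `∫₀^∞ t ^ (μ - 1) e ^ (-(λ - iω) t) dt = (λ - iω) ^ (-μ) Γ(μ)`. For a complex
rate `b` this integral follows from the real case by analytic continuation, both sides
being holomorphic in `b` on the half-plane `0 < re b`.
-/

open MeasureTheory Complex Set Filter Topology FourierTransform

theorem norm_cpow_mul_cexp_neg_mul (a b : ℂ) {t : ℝ} (ht : 0 < t) :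
    ‖(t : ℂ) ^ (a - 1) * cexp (-(b * t))‖ = t ^ (a.re - 1) * Real.exp (-b.re * t) := by
  rw [norm_mul, norm_cpow_eq_rpow_re_of_pos ht, norm_exp]
  simp

theorem continuousOn_cpow_mul_cexp_neg_mul (a b : ℂ) :
    ContinuousOn (fun t : ℝ => (t : ℂ) ^ (a - 1) * cexp (-(b * t))) (Ioi 0) := by
  refine ContinuousOn.mul (fun t ht => ?_) (by fun_prop)
  exact ((continuousAt_cpow_const (ofReal_mem_slitPlane.2 ht)).comp
    continuous_ofReal.continuousAt).continuousWithinAt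

theorem integrableOn_cpow_mul_cexp_neg_mul {a b : ℂ} (ha : 0 < a.re) (hb : 0 < b.re) :
    IntegrableOn (fun t : ℝ => (t : ℂ) ^ (a - 1) * cexp (-(b * t))) (Ioi 0) := by
  have hbound : IntegrableOn (fun t : ℝ => t ^ (a.re - 1) * Real.exp (-b.re * t)) (Ioi 0) := by
    simpa using integrableOn_rpow_mul_exp_neg_mul_rpow (s := a.re - 1) (by linarith) one_pos hb
  refine hbound.mono'
    ((continuousOn_cpow_mul_cexp_neg_mul a b).aestronglyMeasurable measurableSet_Ioi) ?_
  filter_upwards [ae_restrict_mem measurableSet_Ioi] with t ht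
  exact (norm_cpow_mul_cexp_neg_mul a b ht).le

theorem differentiableOn_integral_cpow_mul_cexp_neg_mul {a : ℂ} (ha : 0 < a.re) :
    DifferentiableOn ℂ (fun b : ℂ => ∫ t in Ioi (0 : ℝ), (t : ℂ) ^ (a - 1) * cexp (-(b * t)))
      {b | 0 < b.re} := by
  intro b₀ (hb₀ : 0 < b₀.re)
  set ε := b₀.re / 2 with hε_def
  have hε : 0 < ε := half_pos hb₀
  have hball : ∀ b ∈ Metric.ball b₀ ε, ε < b.re := fun b hb => by
    have := (abs_re_le_norm (b - b₀)).trans_lt (mem_ball_iff_norm.1 hb)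
    rw [sub_re] at this
    linarith [(abs_lt.1 this).1]
  have hbound : IntegrableOn (fun t : ℝ => t ^ a.re * Real.exp (-ε * t)) (Ioi 0) := by
    simpa using integrableOn_rpow_mul_exp_neg_mul_rpow (s := a.re) (by linarith) one_pos hε
  refine (hasDerivAt_integral_of_dominated_loc_of_deriv_le (Metric.ball_mem_nhds b₀ hε)
    (F' := fun b t => (t : ℂ) ^ (a - 1) * cexp (-(b * t)) * -t)
    (Eventually.of_forall fun b =>
      (continuousOn_cpow_mul_cexp_neg_mul a b).aestronglyMeasurable measurableSet_Ioi)
    (integrableOn_cpow_mul_cexp_neg_mul ha hb₀) ?_ ?_ hbound ?_).2.differentiableAt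
    |>.differentiableWithinAt
  · exact ((continuousOn_cpow_mul_cexp_neg_mul a b₀).mul
      continuous_ofReal.neg.continuousOn).aestronglyMeasurable measurableSet_Ioi
  · filter_upwards [ae_restrict_mem measurableSet_Ioi] with t (ht : 0 < t) b hb
    rw [norm_mul, norm_cpow_mul_cexp_neg_mul a b ht, norm_neg, norm_real,
      Real.norm_of_nonneg ht.le]
    calc t ^ (a.re - 1) * Real.exp (-b.re * t) * t = t ^ a.re * Real.exp (-b.re * t) := by
          rw [Real.rpow_sub_one ht.ne']; field_simp
      _ ≤ t ^ a.re * Real.exp (-ε * t) := by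
          gcongr; nlinarith [hball b hb]
  · filter_upwards [ae_restrict_mem measurableSet_Ioi] with t _ b _
    have hexponent : HasDerivAt (fun b : ℂ => -(b * t)) (-t) b :=
      (hasDerivAt_mul_const (t : ℂ)).neg
    simpa only [mul_assoc] using hexponent.cexp.const_mul ((t : ℂ) ^ (a - 1))

theorem eqOn_re_pos_of_forall_ofReal {f g : ℂ → ℂ} (hf : DifferentiableOn ℂ f {z | 0 < z.re})
    (hg : DifferentiableOn ℂ g {z | 0 < z.re}) (hfg : ∀ r : ℝ, 0 < r → f r = g r) :
    EqOn f g {z | 0 < z.re} := by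
  have hopen : IsOpen {z : ℂ | 0 < z.re} := isOpen_lt continuous_const continuous_re
  have hreal : Tendsto ((↑) : ℝ → ℂ) (𝓝[≠] 1) (𝓝[≠] 1) := by
    refine tendsto_nhdsWithin_iff.2 ⟨?_, eventually_nhdsWithin_of_forall fun r hr => ?_⟩
    · simpa using (continuous_ofReal.tendsto 1).mono_left nhdsWithin_le_nhds
    · simpa using hr
  have hfreq : ∃ᶠ z in 𝓝[≠] (1 : ℂ), f z = g z :=
    hreal.frequently (Eventually.frequently <| Filter.mem_of_superset
      (mem_nhdsWithin_of_mem_nhds (Ioi_mem_nhds one_pos)) fun r hr => hfg r hr)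
  exact (hf.analyticOnNhd hopen).eqOn_of_preconnected_of_frequently_eq (hg.analyticOnNhd hopen)
    (convex_halfSpace_re_gt 0).isPreconnected (by simp) hfreq

theorem integral_cpow_mul_cexp_neg_mul_Ioi {a b : ℂ} (ha : 0 < a.re) (hb : 0 < b.re) :
    ∫ t in Ioi (0 : ℝ), (t : ℂ) ^ (a - 1) * cexp (-(b * t)) = b ^ (-a) * Gamma a := by
  refine eqOn_re_pos_of_forall_ofReal (g := fun b => b ^ (-a) * Gamma a)
    (differentiableOn_integral_cpow_mul_cexp_neg_mul ha) (fun z (hz : 0 < z.re) => ?_)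
    (fun r hr => ?_) hb
  · exact ((differentiableAt_id.cpow_const (Or.inl hz)).mul_const _).differentiableWithinAt
  · rw [integral_cpow_mul_exp_neg_mul_Ioi ha hr, one_div, inv_cpow, cpow_neg]
    simpa [arg_ofReal_of_nonneg hr.le] using Real.pi_pos.ne

noncomputable def gammaKernel (a b : ℂ) : ℝ → ℂ :=
  (Ioi 0).indicator fun t => (t : ℂ) ^ (a - 1) * cexp (-(b * t))

theorem integrable_gammaKernel {a b : ℂ} (ha : 0 < a.re) (hb : 0 < b.re) :
    Integrable (gammaKernel a b) :=
  (integrable_indicator_iff measurableSet_Ioi).2 (integrableOn_cpow_mul_cexp_neg_mul ha hb)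

theorem integral_gammaKernel {a b : ℂ} (ha : 0 < a.re) (hb : 0 < b.re) :
    ∫ t, gammaKernel a b t = b ^ (-a) * Gamma a := by
  rw [gammaKernel, integral_indicator measurableSet_Ioi]
  exact integral_cpow_mul_cexp_neg_mul_Ioi ha hb

theorem cexp_mul_gammaKernel (a b c : ℂ) (t : ℝ) :
    cexp (c * t) * gammaKernel a b t = gammaKernel a (b - c) t := by
  by_cases ht : t ∈ Ioi 0
  · simp only [gammaKernel, indicator_of_mem ht]
    rw [mul_left_comm, ← exp_add]
    ring_nf
  · simp [gammaKernel, indicator_of_notMem ht]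

theorem fourier_gammaKernel_neg {a b : ℂ} (ha : 0 < a.re) (hb : 0 < b.re) (w : ℝ) :
    𝓕 (fun t => gammaKernel a b (-t)) w = (b - ↑(2 * Real.pi * w) * I) ^ (-a) * Gamma a := by
  have hre : 0 < (b - ↑(2 * Real.pi * w) * I).re := by simpa using hb
  rw [Real.fourier_real_eq_integral_exp_smul, ← integral_gammaKernel ha hre,
    ← integral_neg_eq_self]
  congr 1 with t
  rw [smul_eq_mul, neg_neg, ← cexp_mul_gammaKernel]
  congr 2
  push_cast
  ring

theorem setIntegral_Ici_eq_convolution_gammaKernel (a b : ℂ) (u : ℝ → ℂ) (x : ℝ) :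
    ∫ ξ in Ici x, ((ξ - x : ℝ) : ℂ) ^ (a - 1) * cexp (-b * (ξ - x)) * u ξ =
      convolution u (fun t => gammaKernel a b (-t)) (ContinuousLinearMap.mul ℂ ℂ) volume x := by
  rw [integral_Ici_eq_integral_Ioi, ← integral_indicator measurableSet_Ioi, convolution_def]
  congr 1 with ξ
  by_cases hξ : x < ξ
  · have hpos : ξ - x ∈ Ioi 0 := sub_pos.2 hξ
    simp only [indicator_of_mem (show ξ ∈ Ioi x from hξ), gammaKernel, neg_sub,
      indicator_of_mem hpos, ContinuousLinearMap.mul_apply']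
    push_cast
    rw [neg_mul, mul_comm]
  · have hpos : ξ - x ∉ Ioi 0 := fun h => hξ (sub_pos.1 h)
    simp [indicator_of_notMem (show ξ ∉ Ioi x from hξ), gammaKernel, indicator_of_notMem hpos]

theorem integral_cexp_neg_I_mul_eq_fourier (f : ℝ → ℂ) (ω : ℝ) :
    ∫ x : ℝ, cexp (-I * ω * x) * f x = 𝓕 f (ω / (2 * Real.pi)) := by
  rw [Real.fourier_real_eq_integral_exp_smul]
  congr 1 with x
  rw [smul_eq_mul]
  congr 2
  push_cast
  field_simp

theorem stmt_6_general (μ lam : ℝ) (hμ : 0 < μ) (hlam : 0 < lam)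
    (u : ℝ → ℂ) (hu1 : Integrable u) :
    ∀ ω : ℝ,
      (∫ x : ℝ, Complex.exp (-Complex.I * ω * x) *
        ((1 / (Real.Gamma μ : ℂ)) *
          ∫ ξ in Set.Ici x, ((ξ - x : ℝ) : ℂ) ^ (μ - 1 : ℂ) *
            Complex.exp (-lam * (ξ - x)) * u ξ)) =
      ((lam : ℂ) - Complex.I * ω) ^ (-(μ : ℂ)) *
        ∫ x : ℝ, Complex.exp (-Complex.I * ω * x) * u x := by
  intro ω
  have hμ' : 0 < (μ : ℂ).re := by simpa using hμ
  have hlam' : 0 < (lam : ℂ).re := by simpa using hlam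
  have hK := (integrable_gammaKernel hμ' hlam').comp_neg
  have hω : (↑(2 * Real.pi * (ω / (2 * Real.pi))) : ℂ) * I = I * ω := by
    rw [mul_div_cancel₀ _ (by positivity), mul_comm]
  simp_rw [setIntegral_Ici_eq_convolution_gammaKernel, mul_left_comm (cexp _),
    integral_const_mul, integral_cexp_neg_I_mul_eq_fourier,
    Real.fourier_mul_convolution_eq hu1 hK, fourier_gammaKernel_neg hμ' hlam', hω,
    Gamma_ofReal]
  have hΓ : (Real.Gamma μ : ℂ) ≠ 0 := ofReal_ne_zero.2 (Real.Gamma_pos_of_pos hμ).ne'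
  field_simp

theorem stmt_6 (μ lam : ℝ) (hμ : 0 < μ) (hlam : 0 < lam)
    (u : ℝ → ℂ) (hu1 : Integrable u) (hu2 : MemLp u 2 volume) :
    ∀ ω : ℝ,
      (∫ x : ℝ, Complex.exp (-Complex.I * ω * x) *
        ((1 / (Real.Gamma μ : ℂ)) *
          ∫ ξ in Set.Ici x, ((ξ - x : ℝ) : ℂ) ^ (μ - 1 : ℂ) *
            Complex.exp (-lam * (ξ - x)) * u ξ)) =
      ((lam : ℂ) - Complex.I * ω) ^ (-(μ : ℂ)) *
        ∫ x : ℝ, Complex.exp (-Complex.I * ω * x) * u x :=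
  stmt_6_general μ lam hμ hlam u hu1
end
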